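/- Let H be a connected graph. If the class of connected H-contraction-free graphs is well-quasi-ordered by the contraction relation, then H is a contraction of the diamond D_2 (the graph obtained from K_4 by deleting one edge). -/

import Mathlib

open SimpleGraph

/-- A contraction model of a graph `H` in a graph `G`: a map sending each vertex of `H`
to a connected subset of vertices of `G`, these subsets partitioning the vertices of `G`,
with distinct vertices of `H` adjacent iff the corresponding subsets are joined by an
edge of `G`. -/
def IsContractionModel {V W : Type*} (G : SimpleGraph V) (H : SimpleGraph W)
    (φ : W → Set V) : Prop :=
  (∀ w : W, (G.induce (φ w)).Connected) ∧
  (∀ v : V, ∃! w : W, v ∈ φ w) ∧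
  ∀ w w' : W, w ≠ w' →
    (H.Adj w w' ↔ ∃ a ∈ φ w, ∃ b ∈ φ w', G.Adj a b)

/-- `H` is a contraction of `G`: there is a contraction model of `H` in `G`
(equivalently, `H` can be obtained from `G` by a sequence of edge contractions). -/
def IsContraction {V W : Type*} (H : SimpleGraph W) (G : SimpleGraph V) : Prop :=
  ∃ φ : W → Set V, IsContractionModel G H φ

/-- The graph `D_r`: two adjacent vertices together with `r` further vertices,
each adjacent to exactly the first two. `D_2` is the diamond (`K₄` minus an edge). -/
def Dgraph (r : ℕ) : SimpleGraph (Fin 2 ⊕ Fin r) :=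
  SimpleGraph.fromRel (fun x _ => x.isLeft)

/-- Finite graphs, with vertex set `Fin n` for some `n`. -/
def FinGraph : Type := Σ n : ℕ, SimpleGraph (Fin n)

/-- The contraction relation on finite graphs. -/
def FinGraph.Contr (H G : FinGraph) : Prop := IsContraction H.2 G.2

/-- A set of finite graphs is well-quasi-ordered by the contraction relation if every
infinite sequence of its members contains two graphs, the earlier being a contraction
of the later. -/
def WqoByContraction (S : Set FinGraph) : Prop :=
  ∀ f : ℕ → FinGraph, (∀ k, f k ∈ S) → ∃ i j : ℕ, i < j ∧ FinGraph.Contr (f i) (f j)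

/-!
Cocktail party graphs and the graphs `K_{2,n}` are connected and complete multipartite. In a
complete multipartite graph nonadjacency is transitive, so a contraction model sends every vertex
with a non-neighbour to a single vertex; hence a graph without a universal vertex is a contraction
of such a graph only if it has at least as many vertices, and both families are infinite
antichains. Well-quasi-ordering therefore makes `H` a contraction of a cocktail party graph larger
than `H`, giving `H` a universal vertex and no three pairwise nonadjacent vertices, and of some
`K_{2,n}`, which makes `H` two hub vertices plus an independent set of common neighbours. The
only such graphs are contractions of the diamond.
-/

section Contraction

variable {V W : Type*} {G : SimpleGraph V} {H : SimpleGraph W}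

lemma connected_induce_of_forall_adj {s : Set V} {c : V} (hc : c ∈ s)
    (h : ∀ x ∈ s, x ≠ c → G.Adj c x) : (G.induce s).Connected := by
  refine (connected_iff_exists_forall_reachable _).2 ⟨⟨c, hc⟩, fun ⟨x, hx⟩ => ?_⟩
  by_cases hxc : x = c
  · subst hxc
    rfl
  · exact Adj.reachable (by simpa using h x hx hxc)

lemma subsingleton_of_connected_induce_of_isIndepSet {s : Set V}
    (hconn : (G.induce s).Connected) (hs : G.IsIndepSet s) : s.Subsingleton := by
  have hbot : G.induce s = ⊥ := by
    ext x y
    simp only [comap_adj, Function.Embedding.coe_subtype, bot_adj, iff_false]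
    exact fun hxy => hs x.2 y.2 hxy.ne hxy
  rw [hbot] at hconn
  exact (Set.subsingleton_coe s).mp (preconnected_bot_iff_subsingleton.mp hconn.preconnected)

namespace IsContractionModel

variable {φ : W → Set V}

lemma nonempty (hφ : IsContractionModel G H φ) (w : W) : (φ w).Nonempty :=
  Set.nonempty_coe_sort.mp (hφ.1 w).nonempty

lemma eq_of_mem (hφ : IsContractionModel G H φ) {v : V} {w w' : W} (hw : v ∈ φ w)
    (hw' : v ∈ φ w') : w = w' :=
  (hφ.2.1 v).unique hw hw'

lemma adj (hφ : IsContractionModel G H φ) {w w' : W} (hne : w ≠ w') {a b : V} (ha : a ∈ φ w)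
    (hb : b ∈ φ w') (hab : G.Adj a b) : H.Adj w w' :=
  (hφ.2.2 w w' hne).2 ⟨a, ha, b, hb, hab⟩

end IsContractionModel

lemma isContraction_of_fibres (f : V → W) (hconn : ∀ w, (G.induce (f ⁻¹' {w})).Connected)
    (hadj : ∀ w w', w ≠ w' → (H.Adj w w' ↔ ∃ a, f a = w ∧ ∃ b, f b = w' ∧ G.Adj a b)) :
    IsContraction H G :=
  ⟨fun w => f ⁻¹' {w}, hconn, fun v => ⟨f v, rfl, fun _ h => h.symm⟩, hadj⟩

lemma IsContraction.indepSetFree {n : ℕ} (h : IsContraction H G) (hG : G.IndepSetFree n) :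
    H.IndepSetFree n := by
  classical
  obtain ⟨φ, hφ⟩ := h
  choose p hp using hφ.nonempty
  intro s hs
  have hinj : Set.InjOn p s := fun w _ w' _ hpw => hφ.eq_of_mem (hp w) (hpw ▸ hp w')
  refine hG (s.image p) ⟨?_, by rw [Finset.card_image_of_injOn hinj, hs.card_eq]⟩
  rw [Finset.coe_image]
  refine Set.Pairwise.image fun w hw w' hw' hne hadj => ?_
  exact hs.isIndepSet hw hw' hne (hφ.adj hne (hp w) (hp w') hadj)

namespace IsCompleteMultipartite

/-- In a complete multipartite graph nonadjacency is transitive, so an edge inside `φ w` would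
have an endpoint adjacent to any vertex of `φ w'`. -/
lemma subsingleton_of_not_adj (hG : G.IsCompleteMultipartite) {φ : W → Set V}
    (hφ : IsContractionModel G H φ) {w w' : W} (hne : w ≠ w') (hnadj : ¬ H.Adj w w') :
    (φ w).Subsingleton := by
  obtain ⟨x, hx⟩ := hφ.nonempty w'
  refine subsingleton_of_connected_induce_of_isIndepSet (hφ.1 w) fun a ha b hb _ hab => ?_
  have hax : ¬ G.Adj a x := fun h => hnadj (hφ.adj hne ha hx h)
  have hxb : ¬ G.Adj x b := fun h => hnadj (hφ.adj hne hb hx h.symm)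
  exact hG.trans a x b hax hxb hab

lemma card_le_of_isContraction [Finite W] (hG : G.IsCompleteMultipartite)
    (h : IsContraction H G) (hH : ∀ w, ∃ w', w ≠ w' ∧ ¬ H.Adj w w') :
    Nat.card V ≤ Nat.card W := by
  obtain ⟨φ, hφ⟩ := h
  have hsingleton : ∀ w, ∃ p, φ w = {p} := fun w => by
    obtain ⟨w', hne, hnadj⟩ := hH w
    exact ((subsingleton_of_not_adj hG hφ hne hnadj).eq_empty_or_singleton).resolve_left
      (hφ.nonempty w).ne_empty
  choose p hp using hsingleton
  refine Nat.card_le_card_of_surjective p fun v => ?_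
  obtain ⟨w, hw, -⟩ := hφ.2.1 v
  rw [hp w] at hw
  exact ⟨w, hw.symm⟩

end IsCompleteMultipartite

end Contraction

section Colouring

variable {V α : Type*}

lemma isCompleteMultipartite_comap_top (f : V → α) :
    ((⊤ : SimpleGraph α).comap f).IsCompleteMultipartite :=
  ⟨fun _ _ _ => by simp_all⟩

lemma connected_comap_top {f : V → α} {u v : V} (huv : f u ≠ f v) :
    ((⊤ : SimpleGraph α).comap f).Connected := by
  refine (connected_iff_exists_forall_reachable _).2 ⟨u, fun x => ?_⟩
  by_cases hx : f u = f x
  · have hvx : f v ≠ f x := hx ▸ huv.symm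
    exact (Adj.reachable (G := (⊤ : SimpleGraph α).comap f) huv).trans (Adj.reachable hvx)
  · exact Adj.reachable hx

end Colouring

/-- The cocktail party graph: `n` disjoint pairs `{2k, 2k + 1}`, with vertices adjacent iff they
lie in different pairs. -/
def cocktailPartyGraph (n : ℕ) : SimpleGraph (Fin (2 * n)) :=
  (⊤ : SimpleGraph ℕ).comap fun v => v.val / 2

/-- `K_{2,n}`, with the two hubs `0` and `1`. -/
def completeBipartiteTwoGraph (n : ℕ) : SimpleGraph (Fin (n + 2)) :=
  (⊤ : SimpleGraph Prop).comap fun v => 2 ≤ v.val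

lemma cocktailPartyGraph_adj {n : ℕ} {u v : Fin (2 * n)} :
    (cocktailPartyGraph n).Adj u v ↔ u.val / 2 ≠ v.val / 2 := Iff.rfl

lemma completeBipartiteTwoGraph_adj {n : ℕ} {u v : Fin (n + 2)} :
    (completeBipartiteTwoGraph n).Adj u v ↔ ¬ (2 ≤ u.val ↔ 2 ≤ v.val) := by
  simp [completeBipartiteTwoGraph]

lemma cocktailPartyGraph_connected {n : ℕ} (hn : 2 ≤ n) : (cocktailPartyGraph n).Connected :=
  connected_comap_top (u := ⟨0, by omega⟩) (v := ⟨2, by omega⟩) (by simp)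

lemma completeBipartiteTwoGraph_connected (n : ℕ) :
    (completeBipartiteTwoGraph (n + 1)).Connected :=
  connected_comap_top (u := 0) (v := ⟨2, by omega⟩) (by simp)

lemma cocktailPartyGraph_exists_not_adj (n : ℕ) (u : Fin (2 * n)) :
    ∃ v, u ≠ v ∧ ¬ (cocktailPartyGraph n).Adj u v := by
  refine ⟨⟨u.val + 1 - 2 * (u.val % 2), by omega⟩, fun h => ?_, ?_⟩
  · have := Fin.ext_iff.mp h
    simp only at this
    omega
  · rw [cocktailPartyGraph_adj, not_not]
    simp only
    omega

lemma completeBipartiteTwoGraph_exists_not_adj (n : ℕ) (u : Fin (n + 4)) :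
    ∃ v, u ≠ v ∧ ¬ (completeBipartiteTwoGraph (n + 2)).Adj u v := by
  obtain ⟨v, hv, hvu⟩ : ∃ v : ℕ, v < n + 4 ∧ v ≠ u.val ∧ (2 ≤ v ↔ 2 ≤ u.val) := by
    rcases Nat.lt_or_ge u.val 2 with hu | hu
    · exact ⟨1 - u.val, by omega, by omega, by omega⟩
    · exact ⟨if u.val = 2 then 3 else 2, by split <;> omega, by split <;> omega,
        by split <;> omega⟩
  refine ⟨⟨v, hv⟩, fun h => hvu.1 (congrArg Fin.val h).symm, ?_⟩
  rw [completeBipartiteTwoGraph_adj]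
  exact fun h => h hvu.2.symm

lemma cocktailPartyGraph_indepSetFree (n : ℕ) : (cocktailPartyGraph n).IndepSetFree 3 := by
  rintro t ⟨ht, hcard⟩
  obtain ⟨x, y, z, hxy, hxz, hyz, rfl⟩ := Finset.card_eq_three.1 hcard
  have hxy' : ¬ (cocktailPartyGraph n).Adj x y := ht (by simp) (by simp) hxy
  have hxz' : ¬ (cocktailPartyGraph n).Adj x z := ht (by simp) (by simp) hxz
  have hyz' : ¬ (cocktailPartyGraph n).Adj y z := ht (by simp) (by simp) hyz
  rw [cocktailPartyGraph_adj, not_not] at hxy' hxz' hyz'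
  have := Fin.val_ne_of_ne hxy
  have := Fin.val_ne_of_ne hxz
  have := Fin.val_ne_of_ne hyz
  omega

lemma cocktailPartyGraph_not_isContraction {m n : ℕ} (h : m < n) :
    ¬ IsContraction (cocktailPartyGraph m) (cocktailPartyGraph n) := by
  intro hc
  have := IsCompleteMultipartite.card_le_of_isContraction (isCompleteMultipartite_comap_top _)
    hc (cocktailPartyGraph_exists_not_adj m)
  simp only [Nat.card_eq_fintype_card, Fintype.card_fin] at this
  omega

lemma completeBipartiteTwoGraph_not_isContraction {m n : ℕ} (h : m < n) :
    ¬ IsContraction (completeBipartiteTwoGraph (m + 2)) (completeBipartiteTwoGraph (n + 2)) := by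
  intro hc
  have := IsCompleteMultipartite.card_le_of_isContraction (isCompleteMultipartite_comap_top _)
    hc (completeBipartiteTwoGraph_exists_not_adj m)
  simp only [Nat.card_eq_fintype_card, Fintype.card_fin] at this
  omega

section Shapes

variable {W : Type*} {H : SimpleGraph W}

lemma exists_forall_adj_of_isContraction_cocktailPartyGraph [Finite W] {n : ℕ}
    (h : IsContraction H (cocktailPartyGraph n)) (hcard : Nat.card W < 2 * n) :
    ∃ u, ∀ w, u ≠ w → H.Adj u w := by
  by_contra! hH
  have := IsCompleteMultipartite.card_le_of_isContraction (isCompleteMultipartite_comap_top _)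
    h hH
  simp only [Nat.card_eq_fintype_card, Fintype.card_fin] at this
  omega

/-- The shape of a contraction of `K_{2,n}`: `a` and `b` are the images of the two hubs
(possibly equal, possibly nonadjacent). -/
structure IsHubPair (H : SimpleGraph W) (a b : W) : Prop where
  adj_left : ∀ w, w ≠ a → w ≠ b → H.Adj a w
  adj_right : ∀ w, w ≠ a → w ≠ b → H.Adj b w
  not_adj : ∀ w w', w ≠ a → w ≠ b → w' ≠ a → w' ≠ b → ¬ H.Adj w w'

lemma exists_isHubPair_of_isContraction {n : ℕ}
    (h : IsContraction H (completeBipartiteTwoGraph n)) : ∃ a b, IsHubPair H a b := by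
  obtain ⟨φ, hφ⟩ := h
  obtain ⟨a, ha, -⟩ := hφ.2.1 0
  obtain ⟨b, hb, -⟩ := hφ.2.1 1
  have hright : ∀ w, w ≠ a → w ≠ b → ∀ x ∈ φ w, 2 ≤ x.val := by
    intro w hwa hwb x hx
    by_contra! hx2
    obtain rfl | rfl : x = 0 ∨ x = 1 := by
      simp only [Fin.ext_iff, Fin.val_zero, Fin.val_one]; omega
    exacts [hwa (hφ.eq_of_mem hx ha), hwb (hφ.eq_of_mem hx hb)]
  have hhub : ∀ w, w ≠ a → w ≠ b → ∀ {c} {y : Fin (n + 2)}, y.val < 2 → y ∈ φ c →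
      H.Adj c w := by
    intro w hwa hwb c y hy hyc
    obtain ⟨x, hx⟩ := hφ.nonempty w
    refine hφ.adj (fun hcw => ?_) hyc hx ?_
    · have := hright w hwa hwb y (hcw ▸ hyc)
      omega
    · rw [completeBipartiteTwoGraph_adj]
      have := hright w hwa hwb x hx
      omega
  refine ⟨a, b, ⟨fun w hwa hwb => hhub w hwa hwb (y := 0) (by simp) ha,
    fun w hwa hwb => hhub w hwa hwb (y := 1) (by simp) hb, ?_⟩⟩
  intro w w' hwa hwb hwa' hwb' hww'
  obtain ⟨x, hx, y, hy, hxy⟩ := (hφ.2.2 w w' hww'.ne).1 hww'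
  rw [completeBipartiteTwoGraph_adj] at hxy
  have := hright w hwa hwb x hx
  have := hright w' hwa' hwb' y hy
  omega

end Shapes

section Diamond

variable {W : Type*} {H : SimpleGraph W}

lemma dgraph_adj {r : ℕ} {x y : Fin 2 ⊕ Fin r} :
    (Dgraph r).Adj x y ↔ x ≠ y ∧ (x.isLeft ∨ y.isLeft) := by
  simp [Dgraph]

/-- `c` and `g` say where the two adjacent vertices and the `r` other vertices of `D_r` go. -/
lemma isContraction_dgraph {r : ℕ} (c : Fin 2 → W) (g : Fin r → W)
    (hcover : ∀ w, (∃ i, c i = w) ∨ ∃ j, g j = w)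
    (hfibre : ∀ j j', g j = g j' → j = j' ∨ ∃ i, c i = g j)
    (hcc : ∀ i i', c i ≠ c i' → H.Adj (c i) (c i'))
    (hcg : ∀ i j, c i ≠ g j → H.Adj (c i) (g j))
    (hedge : ∀ w w', H.Adj w w' → (∃ i, c i = w) ∨ ∃ i, c i = w') :
    IsContraction H (Dgraph r) := by
  set f : Fin 2 ⊕ Fin r → W := Sum.elim c g
  have hedge_of_hub :
      ∀ i w', c i ≠ w' → ∃ a, f a = c i ∧ ∃ b, f b = w' ∧ (Dgraph r).Adj a b := by
    intro i w' hne
    rcases hcover w' with ⟨i', rfl⟩ | ⟨j, rfl⟩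
    · refine ⟨.inl i, rfl, .inl i', rfl, dgraph_adj.2 ⟨fun h => hne ?_, by simp⟩⟩
      rw [Sum.inl_injective h]
    · exact ⟨.inl i, rfl, .inr j, rfl, dgraph_adj.2 ⟨Sum.inl_ne_inr, by simp⟩⟩
  refine isContraction_of_fibres f (fun w => ?_) fun w w' hne => ⟨fun hww' => ?_, ?_⟩
  · by_cases hw : ∃ i, c i = w
    · obtain ⟨i, rfl⟩ := hw
      exact connected_induce_of_forall_adj (c := .inl i) rfl
        fun x _ hx => dgraph_adj.2 ⟨Ne.symm hx, by simp⟩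
    · obtain ⟨j, rfl⟩ := (hcover w).resolve_left hw
      refine connected_induce_of_forall_adj (c := .inr j) rfl fun x hx hxj => absurd ?_ hxj
      rcases x with i | j'
      · exact absurd ⟨i, hx⟩ hw
      · rcases hfibre j' j hx with rfl | ⟨i, hi⟩
        · rfl
        · exact absurd ⟨i, hi.trans hx⟩ hw
  · rcases hedge w w' hww' with ⟨i, rfl⟩ | ⟨i, rfl⟩
    · exact hedge_of_hub i w' hne
    · obtain ⟨a, ha, b, hb, hab⟩ := hedge_of_hub i w hne.symm
      exact ⟨b, hb, a, ha, hab.symm⟩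
  · rintro ⟨a, rfl, b, rfl, hab⟩
    rcases a with i | j <;> rcases b with i' | j'
    · exact hcc i i' hne
    · exact hcg i j' hne
    · exact (hcg i' j hne.symm).symm
    · simp [dgraph_adj] at hab

variable {a b : W}

/-- `g` lists the vertices other than `a` and `b`, padded with copies of `a`. -/
lemma isContraction_dgraph_two_of_isHubPair_of_adj (hH : IsHubPair H a b)
    (hab : a = b ∨ H.Adj a b) (g : Fin 2 → W) (hg : ∀ j, g j = a ∨ g j ≠ a ∧ g j ≠ b)
    (hcover : ∀ w, w ≠ a → w ≠ b → ∃ j, g j = w) (hfibre : g 0 = g 1 → g 0 = a) :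
    IsContraction H (Dgraph 2) := by
  have hhub : ∀ x y, x ≠ y → x = a ∨ x = b → y = a ∨ y = b ∨ y ≠ a ∧ y ≠ b → H.Adj x y := by
    rintro x y hxy (rfl | rfl) (rfl | rfl | ⟨hya, hyb⟩)
    · exact absurd rfl hxy
    · exact hab.resolve_left hxy
    · exact hH.adj_left y hya hyb
    · exact (hab.resolve_left hxy.symm).symm
    · exact absurd rfl hxy
    · exact hH.adj_right y hya hyb
  have hc : ∀ i, ![a, b] i = a ∨ ![a, b] i = b := by simp [Fin.forall_fin_two]
  refine isContraction_dgraph ![a, b] g (fun w => ?_) ?_ (fun i i' hne => ?_)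
    (fun i j hne => ?_) fun w w' hww' => ?_
  · by_cases hwa : w = a
    · exact .inl ⟨0, hwa.symm⟩
    by_cases hwb : w = b
    · exact .inl ⟨1, hwb.symm⟩
    exact .inr (hcover w hwa hwb)
  · simp only [Fin.forall_fin_two, Fin.exists_fin_two, Matrix.cons_val_zero,
      Matrix.cons_val_one]
    grind
  · exact hhub _ _ hne (hc i) (by rcases hc i' with h | h <;> simp [h])
  · exact hhub _ _ hne (hc i) (by rcases hg j with h | h <;> simp [h])
  · by_contra! hout
    exact hH.not_adj w w' (hout.1 0).symm (hout.1 1).symm (hout.2 0).symm (hout.2 1).symm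
      hww'

lemma isContraction_dgraph_two_of_isHubPair_of_not_adj (hH : IsHubPair H a b) (hne : a ≠ b)
    (hab : ¬ H.Adj a b) {u : W} (hu : ∀ w, u ≠ w → H.Adj u w) :
    IsContraction H (Dgraph 2) := by
  have hua : u ≠ a := by
    rintro rfl
    exact hab (hu b hne)
  have hub : u ≠ b := by
    rintro rfl
    exact hab (hu a hne.symm).symm
  have hcover : ∀ w, w = u ∨ w = a ∨ w = b := by
    intro w
    by_contra! h
    exact hH.not_adj u w hua hub h.2.1 h.2.2 (hu w h.1.symm)
  refine isContraction_dgraph ![u, u] ![a, b] (fun w => ?_) ?_ ?_ ?_ fun w w' hww' => ?_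
  · rcases hcover w with rfl | rfl | rfl
    exacts [.inl ⟨0, rfl⟩, .inr ⟨0, rfl⟩, .inr ⟨1, rfl⟩]
  · simp [Fin.forall_fin_two, hne, hne.symm]
  · simp [Fin.forall_fin_two]
  · simp [Fin.forall_fin_two, hu a hua, hu b hub]
  · by_cases hw : w = u
    · exact .inl ⟨0, hw.symm⟩
    by_cases hw' : w' = u
    · exact .inr ⟨0, hw'.symm⟩
    exfalso
    obtain rfl | rfl := (hcover w).resolve_left hw <;>
      obtain rfl | rfl := (hcover w').resolve_left hw'
    exacts [hww'.ne rfl, hab hww', hab hww'.symm, hww'.ne rfl]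

lemma isContraction_dgraph_two_of_isHubPair (hH : IsHubPair H a b) (hα : H.IndepSetFree 3)
    (huniv : ∃ u, ∀ w, u ≠ w → H.Adj u w) : IsContraction H (Dgraph 2) := by
  classical
  by_cases hab : a ≠ b ∧ ¬ H.Adj a b
  · obtain ⟨u, hu⟩ := huniv
    exact isContraction_dgraph_two_of_isHubPair_of_not_adj hH hab.1 hab.2 hu
  replace hab : a = b ∨ H.Adj a b := by tauto
  by_cases hr : ∀ r, r ≠ a → r = b
  · exact isContraction_dgraph_two_of_isHubPair_of_adj hH hab ![a, a] (by simp)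
      (fun w hwa hwb => absurd (hr w hwa) hwb) fun _ => rfl
  push Not at hr
  obtain ⟨r, hra, hrb⟩ := hr
  by_cases hs : ∀ s, s ≠ a → s ≠ b → s = r
  · exact isContraction_dgraph_two_of_isHubPair_of_adj hH hab ![r, a]
      (by simp [Fin.forall_fin_two, hra, hrb]) (fun w hwa hwb => ⟨0, (hs w hwa hwb).symm⟩)
      fun h => absurd h hra
  push Not at hs
  obtain ⟨s, hsa, hsb, hsr⟩ := hs
  have hrs : ∀ w, w ≠ a → w ≠ b → w = r ∨ w = s := by
    intro w hwa hwb
    by_contra! hw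
    refine hα {r, s, w} ?_
    rw [← isNClique_compl, is3Clique_triple_iff]
    simp only [compl_adj]
    exact ⟨⟨hsr.symm, hH.not_adj r s hra hrb hsa hsb⟩,
      ⟨Ne.symm hw.1, hH.not_adj r w hra hrb hwa hwb⟩,
      ⟨Ne.symm hw.2, hH.not_adj s w hsa hsb hwa hwb⟩⟩
  refine isContraction_dgraph_two_of_isHubPair_of_adj hH hab ![r, s]
    (by simp [Fin.forall_fin_two, hra, hrb, hsa, hsb]) (fun w hwa hwb => ?_)
    fun h => absurd h hsr.symm
  rcases hrs w hwa hwb with rfl | rfl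
  exacts [⟨0, rfl⟩, ⟨1, rfl⟩]

end Diamond

lemma exists_isContraction_of_wqo {W : Type*} {H : SimpleGraph W}
    (hwqo : WqoByContraction {G : FinGraph | G.2.Connected ∧ ¬ IsContraction H G.2})
    (f : ℕ → FinGraph) (hconn : ∀ k, (f k).2.Connected)
    (hanti : ∀ i j, i < j → ¬ (f i).Contr (f j)) (N : ℕ) :
    ∃ k, N ≤ k ∧ IsContraction H (f k).2 := by
  by_contra! hfree
  obtain ⟨i, j, hij, hcontr⟩ :=
    hwqo (fun k => f (k + N)) fun k => ⟨hconn _, hfree _ (Nat.le_add_left N k)⟩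
  exact hanti _ _ (by omega) hcontr

theorem contraction_of_diamond_of_wqo_general {W : Type*} [Fintype W]
    (H : SimpleGraph W)
    (hwqo : WqoByContraction {G : FinGraph | G.2.Connected ∧ ¬ IsContraction H G.2}) :
    IsContraction H (Dgraph 2) := by
  obtain ⟨k, hk, hcocktail⟩ := exists_isContraction_of_wqo hwqo
    (fun k => ⟨2 * (k + 2), cocktailPartyGraph (k + 2)⟩)
    (fun _ => cocktailPartyGraph_connected (by omega))
    (fun _ _ hij => cocktailPartyGraph_not_isContraction (by omega)) (Nat.card W)
  obtain ⟨m, -, hbipartite⟩ := exists_isContraction_of_wqo hwqo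
    (fun k => ⟨k + 4, completeBipartiteTwoGraph (k + 2)⟩)
    (fun k => completeBipartiteTwoGraph_connected (k + 1))
    (fun _ _ hij => completeBipartiteTwoGraph_not_isContraction hij) 0
  obtain ⟨a, b, hH⟩ := exists_isHubPair_of_isContraction hbipartite
  exact isContraction_dgraph_two_of_isHubPair hH
    (hcocktail.indepSetFree (cocktailPartyGraph_indepSetFree _))
    (exists_forall_adj_of_isContraction_cocktailPartyGraph hcocktail (by omega))

/-- Let `H` be a connected graph. If the class of connected
`H`-contraction-free graphs is well-quasi-ordered by the contraction relation,
then `H` is a contraction of the diamond `D₂` (i.e. `K₄` minus an edge). -/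
theorem contraction_of_diamond_of_wqo {W : Type*} [Fintype W]
    (H : SimpleGraph W) (hH : H.Connected)
    (hwqo : WqoByContraction {G : FinGraph | G.2.Connected ∧ ¬ IsContraction H G.2}) :
    IsContraction H (Dgraph 2) :=
  contraction_of_diamond_of_wqo_general H hwqo
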